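/- With E′ the ideal of W generated by T₂ − 3·1, T₃ − 4·1, T₇ − 8·1, T₁₁ − 12·1, T₁₉ − 20·1, T₂₉ − 30·1, the elements T₅ − 29·1 and T₁₃ − 13·1 lie in E′, where T₅ = (−1, 1, −1) and T₁₃ = (−1, −1, 1); equivalently, the images of T₅ and T₁₃ in W/E′ ≅ ℤ/84ℤ ≅ ℤ/4ℤ × ℤ/3ℤ × ℤ/7ℤ are 29 and 13, i.e. the triples (1, −1, 1) and (1, 1, −1) respectively. -/

import Mathlib

abbrev Rng : Type := ℤ × Zsqrtd 2 × Zsqrtd 3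

def Wset : Set Rng :=
  {p | p.1 ≡ p.2.1.re [ZMOD 2] ∧ p.1 ≡ p.2.2.re + p.2.2.im [ZMOD 2] ∧
       p.2.1.im ≡ p.2.2.im [ZMOD 2]}

private lemma modeq_iff (a b : ℤ) : a ≡ b [ZMOD 2] ↔ ((a : ZMod 2) = b) :=
  (ZMod.intCast_eq_intCast_iff a b 2).symm

def W : Subring Rng where
  carrier := Wset
  zero_mem' := by refine ⟨?_, ?_, ?_⟩ <;> decide
  one_mem' := by refine ⟨?_, ?_, ?_⟩ <;> decide
  add_mem' := by
    rintro a b ⟨h1, h2, h3⟩ ⟨g1, g2, g3⟩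
    refine ⟨h1.add g1, ?_, h3.add g3⟩
    simpa [add_add_add_comm] using h2.add g2
  neg_mem' := by
    rintro a ⟨h1, h2, h3⟩
    refine ⟨h1.neg, ?_, h3.neg⟩
    have := h2.neg
    simp only [Wset, Set.mem_setOf_eq, Prod.fst_neg, Prod.snd_neg, Zsqrtd.re_neg,
      Zsqrtd.im_neg, Int.modEq_iff_dvd] at this ⊢
    omega
  mul_mem' := by
    rintro a b ⟨h1, h2, h3⟩ ⟨g1, g2, g3⟩
    simp only [Wset, Set.mem_setOf_eq, Prod.fst_mul, Prod.snd_mul, Zsqrtd.re_mul,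
      Zsqrtd.im_mul, modeq_iff] at h1 h2 h3 g1 g2 g3 ⊢
    push_cast at h1 h2 h3 g1 g2 g3 ⊢
    have h0 : (2 : ZMod 2) = 0 := rfl
    refine ⟨?_, ?_, ?_⟩
    · rw [← h1, ← g1, h0]; ring
    · linear_combination (b.1 : ZMod 2) * h2 + ((a.2.2.re : ZMod 2) + a.2.2.im) * g2 -
        ((a.2.2.im : ZMod 2) * b.2.2.im) * h0
    · linear_combination (b.2.1.im : ZMod 2) * h2 - (b.2.1.im : ZMod 2) * h1
        + (b.2.1.re : ZMod 2) * h3 + ((a.2.2.re : ZMod 2) + a.2.2.im) * g3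
        + (a.2.2.im : ZMod 2) * g2 - (a.2.2.im : ZMod 2) * g1
        + ((a.2.2.im : ZMod 2) * b.2.2.im) * h0

lemma mem_W_iff (x : Rng) : x ∈ W ↔ x ∈ Wset := Iff.rfl

/-- `T₂ = (−1, −1+√2, √3)` as an element of `W`. -/
def T2w : W :=
  ⟨((-1 : ℤ), (⟨-1, 1⟩ : Zsqrtd 2), (⟨0, 1⟩ : Zsqrtd 3)), by
    rw [mem_W_iff]; refine ⟨?_, ?_, ?_⟩ <;> decide⟩

/-- `T₃ = (−2, √2, 1−√3)` as an element of `W`. -/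
def T3w : W :=
  ⟨((-2 : ℤ), (⟨0, 1⟩ : Zsqrtd 2), (⟨1, -1⟩ : Zsqrtd 3)), by
    rw [mem_W_iff]; refine ⟨?_, ?_, ?_⟩ <;> decide⟩

/-- `T₇ = (−4, 2−2√2, 2)` as an element of `W`. -/
def T7w : W :=
  ⟨((-4 : ℤ), (⟨2, -2⟩ : Zsqrtd 2), (⟨2, 0⟩ : Zsqrtd 3)), by
    rw [mem_W_iff]; refine ⟨?_, ?_, ?_⟩ <;> decide⟩

/-- `T₁₁ = (2, 2−√2, −3+√3)` as an element of `W`. -/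
def T11w : W :=
  ⟨((2 : ℤ), (⟨2, -1⟩ : Zsqrtd 2), (⟨-3, 1⟩ : Zsqrtd 3)), by
    rw [mem_W_iff]; refine ⟨?_, ?_, ?_⟩ <;> decide⟩

/-- `T₁₉ = (−6, 2+√2, −1+3√3)` as an element of `W`. -/
def T19w : W :=
  ⟨((-6 : ℤ), (⟨2, 1⟩ : Zsqrtd 2), (⟨-1, 3⟩ : Zsqrtd 3)), by
    rw [mem_W_iff]; refine ⟨?_, ?_, ?_⟩ <;> decide⟩

/-- `T₂₉ = (2, 4√2, −6−2√3)` as an element of `W`. -/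
def T29w : W :=
  ⟨((2 : ℤ), (⟨0, 4⟩ : Zsqrtd 2), (⟨-6, -2⟩ : Zsqrtd 3)), by
    rw [mem_W_iff]; refine ⟨?_, ?_, ?_⟩ <;> decide⟩

/-- The ideal `E′` of `W` generated by `T₂ − 3, T₃ − 4, T₇ − 8, T₁₁ − 12, T₁₉ − 20,
T₂₉ − 30` (i.e. by the elements `T_ℓ − (ℓ+1)·1`). -/
def Eis : Ideal W :=
  Ideal.span {T2w - 3, T3w - 4, T7w - 8, T11w - 12, T19w - 20, T29w - 30}

/-- `T₅ = (−1, 1, −1)` as an element of `W`. -/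
def T5w : W :=
  ⟨((-1 : ℤ), (⟨1, 0⟩ : Zsqrtd 2), (⟨-1, 0⟩ : Zsqrtd 3)), by
    rw [mem_W_iff]; refine ⟨?_, ?_, ?_⟩ <;> decide⟩

/-- `T₁₃ = (−1, −1, 1)` as an element of `W`. -/
def T13w : W :=
  ⟨((-1 : ℤ), (⟨-1, 0⟩ : Zsqrtd 2), (⟨1, 0⟩ : Zsqrtd 3)), by
    rw [mem_W_iff]; refine ⟨?_, ?_, ?_⟩ <;> decide⟩

/-!
Both elements are already `W`-linear combinations of the first three generators
`T₂ − 3`, `T₃ − 4`, `T₇ − 8`. As `W` is free of rank 5 over `ℤ`, the coefficients solve a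
linear system over `ℤ`, and the resulting identities are checked coordinatewise.
-/

lemma span_T2_T3_T7_le_Eis : Ideal.span {T2w - 3, T3w - 4, T7w - 8} ≤ Eis :=
  Ideal.span_mono <| Set.insert_subset_insert <| Set.insert_subset_insert <|
    Set.singleton_subset_iff.2 <| Set.mem_insert _ _

lemma T5w_sub_mem_span : T5w - 29 ∈ Ideal.span {T2w - 3, T3w - 4, T7w - 8} :=
  Submodule.mem_span_triple.2
    ⟨⟨(9, ⟨9, 58⟩, ⟨9, -14⟩), by decide, by decide, by decide⟩,
     ⟨(87, ⟨87, -12⟩, ⟨87, -12⟩), by decide, by decide, by decide⟩,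
     -44, by ext <;> decide⟩

lemma T13w_sub_mem_span : T13w - 13 ∈ Ideal.span {T2w - 3, T3w - 4, T7w - 8} :=
  Submodule.mem_span_triple.2
    ⟨⟨(5, ⟨5, 20⟩, ⟨5, -4⟩), by decide, by decide, by decide⟩,
     ⟨(29, ⟨29, -4⟩, ⟨29, -4⟩), by decide, by decide, by decide⟩,
     -15, by ext <;> decide⟩

/-- `T₅ − 29·1` and `T₁₃ − 13·1` lie in the Eisenstein ideal `E′`; equivalently, the
images of `T₅` and `T₁₃` in `W/E′ ≅ ℤ/84ℤ` are `29` and `13`. -/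
theorem stmt12 : T5w - 29 ∈ Eis ∧ T13w - 13 ∈ Eis :=
  ⟨span_T2_T3_T7_le_Eis T5w_sub_mem_span, span_T2_T3_T7_le_Eis T13w_sub_mem_span⟩
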